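/- Let m ≥ 4 and 3 ≤ i < m. Let P = T_{m−1} × {+1,−1} be the point set of the Fischer space 𝒟_m, with collinearity (x,ε) ∼ (y,η) iff x ≠ y and the supports of x,y share exactly one point, and with (x,ε)∧(y,η) = (x·y·x, εη) for collinear pairs. For a point p let τ(p): P → P be the map q ↦ p∧q if p ∼ q and q ↦ q otherwise, and let t_i: P → P be the map (x,ε) ↦ (x,−ε) if the support of x meets {1,…,i} in exactly one point and (x,ε) ↦ (x,ε) otherwise. Then for every bijection g: P → P preserving collinearity (p ∼ q ⟺ g(p) ∼ g(q)) and every point p ∈ P, t_i ≠ g ∘ τ(p) ∘ g⁻¹. (In particular the Miyamoto involution of id_{𝒟_i} is not conjugate to the Miyamoto involution of any point of 𝒟_m.) -/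

import Mathlib

open Equiv

instance {n : ℕ} : DecidablePred (Equiv.Perm.IsSwap : Equiv.Perm (Fin n) → Prop) := by
  intro σ; unfold Equiv.Perm.IsSwap; infer_instance

abbrev Tr (n : ℕ) : Type := {σ : Equiv.Perm (Fin (n + 1)) // σ.IsSwap}

/-- Two transpositions are collinear when their supports share exactly one point. -/
def Coll {n : ℕ} (s t : Tr n) : Prop :=
  (s.1.support ∩ t.1.support).card = 1

instance {n : ℕ} (s t : Tr n) : Decidable (Coll s t) := by
  unfold Coll; infer_instance

/-- The third point `s·t·s` of the line through collinear transpositions. -/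
def wedge {n : ℕ} (s t : Tr n) : Tr n :=
  ⟨s.1 * t.1 * s.1, by
    obtain ⟨x, y, hxy, ht⟩ := t.2
    obtain ⟨a, b, hab, hs⟩ := s.2
    have hinv : s.1⁻¹ = s.1 := by rw [hs]; exact Equiv.swap_inv a b
    exact ⟨s.1 x, s.1 y, fun h => hxy (s.1.injective h), by
      rw [ht, Equiv.swap_apply_apply, hinv]⟩⟩

/-- The point set of the Fischer space `𝒟_m`: pairs `(x, ε)` with `x` a transposition
of `Sym(m)` and `ε ∈ {+1, -1}`. -/
abbrev DPt (m : ℕ) : Type := Tr (m - 1) × ℤˣ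

/-- The Miyamoto involution `τ(p)` of a point `p` of `𝒟_m`, acting on points: it sends
each point collinear with `p` to the third point of their common line, and fixes all
other points. -/
def tau {m : ℕ} (p : DPt m) : DPt m → DPt m :=
  fun q => if Coll p.1 q.1 then (wedge p.1 q.1, p.2 * q.2) else q

/-- The Miyamoto involution `t_i` of `id_{𝒟_i}`, acting on points of `𝒟_m`: it flips
the sign of `(x, ε)` when the support of `x` meets `{1, …, i}` in exactly one point and
fixes `(x, ε)` otherwise. -/
def tI (m i : ℕ) : DPt m → DPt m :=
  fun p =>
    if (p.1.1.support.filter (fun a : Fin (m - 1 + 1) => (a : ℕ) < i)).card = 1 then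
      (p.1, -p.2)
    else p


/-!
The involution `t_i` moves the point `((1 i), ε)` to `((1 i), -ε)`: a point with the same
transposition, hence not collinear with it. The involution `τ(p)` moves every point it
does not fix to a point collinear with it, and a collinearity-preserving bijection carries
this property over to every conjugate of `τ(p)`.
-/

open Finset

section Transpositions

variable {n : ℕ}

lemma not_coll_self (s : Tr n) : ¬ Coll s s := by
  rw [Coll, inter_self, Perm.card_support_eq_two.2 s.2]
  decide

lemma Tr.inv_eq (s : Tr n) : s.1⁻¹ = s.1 := by
  obtain ⟨a, b, -, hs⟩ := s.2
  rw [hs, swap_inv]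

lemma mem_support_wedge {s t : Tr n} {z : Fin (n + 1)} :
    z ∈ (wedge s t).1.support ↔ s.1 z ∈ t.1.support := by
  have hconj : (wedge s t).1 = s.1 * t.1 * s.1⁻¹ := by rw [s.inv_eq]; rfl
  rw [hconj, Perm.support_conj, mem_map_equiv, ← Perm.inv_def, s.inv_eq]

/- If the supports of `s` and `t = (e f)` meet in `e`, then `s t s = (s(e) f)`, whose support
meets that of `t` in `f` alone. -/
lemma coll_wedge {s t : Tr n} (h : Coll s t) : Coll t (wedge s t) := by
  obtain ⟨e, he⟩ := card_eq_one.1 h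
  have he_mem : e ∈ s.1.support ∧ e ∈ t.1.support := mem_inter.1 (he ▸ mem_singleton_self e)
  have hst {z} (hs : z ∈ s.1.support) (ht : z ∈ t.1.support) : z = e :=
    mem_singleton.1 (he ▸ mem_inter.2 ⟨hs, ht⟩)
  obtain ⟨f, hf⟩ : ∃ f, t.1.support.erase e = {f} := by
    rw [← card_eq_one, card_erase_of_mem he_mem.2, Perm.card_support_eq_two.2 t.2]
  have hf_mem : f ∈ t.1.support := mem_of_mem_erase (hf ▸ mem_singleton_self f)
  have hfe : f ≠ e := ne_of_mem_erase (hf ▸ mem_singleton_self f)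
  have hsf : s.1 f = f := Perm.notMem_support.1 fun hs => hfe (hst hs hf_mem)
  have hse : s.1 e ∉ t.1.support := fun ht =>
    Perm.mem_support.1 he_mem.1 (hst (Perm.apply_mem_support.2 he_mem.1) ht)
  refine card_eq_one.2 ⟨f, eq_singleton_iff_unique_mem.2 ⟨?_, fun z hz => ?_⟩⟩
  · exact mem_inter.2 ⟨hf_mem, mem_support_wedge.2 (by rwa [hsf])⟩
  · obtain ⟨hzt, hzw⟩ := mem_inter.1 hz
    rw [mem_support_wedge] at hzw
    have hze : z ≠ e := by rintro rfl; exact hse hzw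
    exact mem_singleton.1 (hf ▸ mem_erase.2 ⟨hze, hzt⟩)

end Transpositions

lemma coll_tau_of_ne {m : ℕ} {p q : DPt m} (h : tau p q ≠ q) : Coll q.1 (tau p q).1 := by
  unfold tau at h ⊢
  split_ifs at h ⊢ with hpq
  · exact coll_wedge hpq
  · exact (h rfl).elim

lemma tI_fst (m i : ℕ) (q : DPt m) : (tI m i q).1 = q.1 := by
  unfold tI
  split_ifs <;> rfl

lemma exists_tI_ne {m i : ℕ} (hi : 0 < i) (him : i < m) : ∃ q : DPt m, tI m i q ≠ q := by
  let a : Fin (m - 1 + 1) := ⟨0, by omega⟩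
  let b : Fin (m - 1 + 1) := ⟨i, by omega⟩
  have hab : a ≠ b := Fin.ne_of_val_ne hi.ne
  refine ⟨(⟨swap a b, a, b, hab, rfl⟩, 1), ?_⟩
  have hfilter : ((swap a b).support.filter fun z : Fin (m - 1 + 1) => (z : ℕ) < i) = {a} := by
    rw [Perm.support_swap hab, filter_insert, filter_singleton]
    simp [a, b, hi]
  simp [tI, hfilter]

theorem tI_not_conjugate_to_point_involution_general (m i : ℕ) (hi : 3 ≤ i)
    (him : i < m) :
    ∀ g : Equiv.Perm (DPt m),
      (∀ p q : DPt m, Coll p.1 q.1 ↔ Coll (g p).1 (g q).1) →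
      ∀ p : DPt m, tI m i ≠ ⇑g ∘ tau p ∘ ⇑g.symm := by
  intro g hg p h
  obtain ⟨q, hq⟩ := exists_tI_ne (by omega : 0 < i) him
  have hconj : tI m i q = g (tau p (g.symm q)) := by rw [h]; rfl
  have hmoved : tau p (g.symm q) ≠ g.symm q := fun heq =>
    hq (by rw [hconj, heq, g.apply_symm_apply])
  have hcoll := (hg _ _).1 (coll_tau_of_ne hmoved)
  rw [g.apply_symm_apply, ← hconj, tI_fst] at hcoll
  exact not_coll_self q.1 hcoll

/-- for `m ≥ 4` and `3 ≤ i < m`, the Miyamoto involution `t_i` of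
`id_{𝒟_i}` is not conjugate, under any collinearity-preserving bijection of the point
set of `𝒟_m`, to the Miyamoto involution `τ(p)` of any point `p` of `𝒟_m`. -/
theorem tI_not_conjugate_to_point_involution (m i : ℕ) (hm : 4 ≤ m) (hi : 3 ≤ i)
    (him : i < m) :
    ∀ g : Equiv.Perm (DPt m),
      (∀ p q : DPt m, Coll p.1 q.1 ↔ Coll (g p).1 (g q).1) →
      ∀ p : DPt m, tI m i ≠ ⇑g ∘ tau p ∘ ⇑g.symm :=
  tI_not_conjugate_to_point_involution_general m i hi him
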